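/- Let G be a weighted concurrent game and σ_Agt a strategy profile in G with payoff vector p = payoff(σ_Agt). Then σ_Agt is a (k,t,r)-robust equilibrium in G if, and only if, the Eve strategy π(σ_Agt) is winning in the deviator game D(G) for the robustness objective R(k,t,r,p) = Re(k,p) ∩ I(t,r,p). -/

import Mathlib

open Filter

section Defs

variable {Stat Agt Act : Type}

/-- A weighted concurrent game: finite sets of states/players/actions are imposed
via `Fintype` assumptions in the theorems. -/
structure CGame (Stat Agt Act : Type) where
  s0 : Stat
  Tab : Stat → (Agt → Act) → Stat
  w : Agt → Stat → ℤ

/-- A history: an initial state followed by a finite alternating list of moves and states. -/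
abbrev Hist (Stat Agt Act : Type) := Stat × List ((Agt → Act) × Stat)

abbrev Strategy (Stat Agt Act : Type) := Hist Stat Agt Act → Act

abbrev Profile (Stat Agt Act : Type) := Agt → Strategy Stat Agt Act

/-- A play: an infinite alternating sequence of states and moves. -/
structure Play (Stat Agt Act : Type) where
  state : ℕ → Stat
  move : ℕ → Agt → Act

/-- The prefix `ρ_{≤ m}` of a play: the history containing states `0..m` and moves `0..m-1`. -/
def Play.pref (ρ : Play Stat Agt Act) (m : ℕ) : Hist Stat Agt Act :=
  (ρ.state 0, (List.range m).map fun j => (ρ.move j, ρ.state (j + 1)))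

/-- `ρ` respects the transition function of `G` (it is a play of `G`). -/
def IsPlay (G : CGame Stat Agt Act) (ρ : Play Stat Agt Act) : Prop :=
  ∀ j, ρ.state (j + 1) = G.Tab (ρ.state j) (ρ.move j)

/-- The deviators from move `a` to move `a'`. -/
def devMove (a a' : Agt → Act) : Set Agt := {A | a A ≠ a' A}

/-- The deviators of a play with respect to a strategy profile. -/
def devPlay (σ : Profile Stat Agt Act) (ρ : Play Stat Agt Act) : Set Agt :=
  ⋃ i : ℕ, devMove (ρ.move i) fun A => σ A (ρ.pref i)

/-- The deviators of the prefix `ρ_{≤ i}` with respect to a strategy profile. -/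
def devPref (σ : Profile Stat Agt Act) (ρ : Play Stat Agt Act) (i : ℕ) : Set Agt :=
  ⋃ j ∈ Finset.range i, devMove (ρ.move j) fun A => σ A (ρ.pref j)

/-- A play is compatible with the strategy of coalition `C` (move condition). -/
def Compatible (C : Set Agt) (σ : Profile Stat Agt Act) (ρ : Play Stat Agt Act) : Prop :=
  ∀ j, ∀ A ∈ C, ρ.move j A = σ A (ρ.pref j)

/-- `Out_G(s, σ_C)`: plays of `G` starting at `s` compatible with `σ` on coalition `C`. -/
def OutFrom (G : CGame Stat Agt Act) (s : Stat) (C : Set Agt) (σ : Profile Stat Agt Act) :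
    Set (Play Stat Agt Act) :=
  {ρ | ρ.state 0 = s ∧ IsPlay G ρ ∧ Compatible C σ ρ}

open Classical in
/-- The profile `(σ_{-C}, σ'_C)`: agrees with `σ'` on `C` and with `σ` outside `C`. -/
noncomputable def combine (C : Set Agt) (σ σ' : Profile Stat Agt Act) : Profile Stat Agt Act :=
  fun A => if A ∈ C then σ' A else σ A

/-- Mean payoff of player `A` along a play. -/
noncomputable def payoffPlay (G : CGame Stat Agt Act) (A : Agt) (ρ : Play Stat Agt Act) : ℝ :=
  Filter.liminf
    (fun m => (∑ l ∈ Finset.range (m + 1), (G.w A (ρ.state l) : ℝ)) / (m : ℝ)) Filter.atTop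

def histLast (h : Hist Stat Agt Act) : Stat := (h.2.map Prod.snd).getLastD h.1

/-- The history of length `m+1` produced by the strategy profile `σ` from `s0`. -/
def outHist (G : CGame Stat Agt Act) (σ : Profile Stat Agt Act) : ℕ → Hist Stat Agt Act
  | 0 => (G.s0, [])
  | m + 1 =>
    let h := outHist G σ m
    (h.1, h.2 ++ [(fun A => σ A h, G.Tab (histLast h) fun A => σ A h)])

/-- The unique outcome of a full strategy profile from `s0`. -/
def outcomePlay (G : CGame Stat Agt Act) (σ : Profile Stat Agt Act) : Play Stat Agt Act :=
  ⟨fun m => histLast (outHist G σ m), fun m A => σ A (outHist G σ m)⟩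

/-- The payoff vector of a strategy profile. -/
noncomputable def payoffProfile (G : CGame Stat Agt Act) (σ : Profile Stat Agt Act) (A : Agt) :
    ℝ :=
  payoffPlay G A (outcomePlay G σ)

/-! The deviator game `D(G)`. -/

abbrev DState (Stat Agt : Type) := Stat × Set Agt

abbrev DHist (Stat Agt Act : Type) :=
  DState Stat Agt × List (((Agt → Act) × (Agt → Act)) × DState Stat Agt)

abbrev EveStrategy (Stat Agt Act : Type) := DHist Stat Agt Act → Agt → Act

/-- A play of the deviator game: states together with Eve's and Adam's moves. -/
structure DPlay (Stat Agt Act : Type) where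
  state : ℕ → DState Stat Agt
  eveMove : ℕ → Agt → Act
  adamMove : ℕ → Agt → Act

/-- Transition function of the deviator game. -/
def DTab (G : CGame Stat Agt Act) (q : DState Stat Agt) (a a' : Agt → Act) : DState Stat Agt :=
  (G.Tab q.1 a', q.2 ∪ devMove a a')

def DPlay.pref (ρ : DPlay Stat Agt Act) (m : ℕ) : DHist Stat Agt Act :=
  (ρ.state 0, (List.range m).map fun j => ((ρ.eveMove j, ρ.adamMove j), ρ.state (j + 1)))

/-- Projection of a history of `D(G)` to a history of `G` (first state component, Adam's move). -/
def projHist (h : DHist Stat Agt Act) : Hist Stat Agt Act :=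
  (h.1.1, h.2.map fun x => (x.1.2, x.2.1))

/-- Projection `π` of a play of `D(G)` to a play of `G`. -/
def projPlay (ρ : DPlay Stat Agt Act) : Play Stat Agt Act :=
  ⟨fun i => (ρ.state i).1, ρ.adamMove⟩

/-- The Eve strategy `π(σ_Agt)` associated with a strategy profile. -/
def eveOf (σ : Profile Stat Agt Act) : EveStrategy Stat Agt Act :=
  fun h A => σ A (projHist h)

/-- `δ(ρ)`: the limit of the deviator components along a play of `D(G)`. -/
def delta (ρ : DPlay Stat Agt Act) : Set Agt := ⋃ i : ℕ, (ρ.state i).2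

/-- Play of the deviator game from state `q` where Eve follows `σE` and Adam is unconstrained. -/
def IsDPlayFrom (G : CGame Stat Agt Act) (q : DState Stat Agt) (σE : EveStrategy Stat Agt Act)
    (ρ : DPlay Stat Agt Act) : Prop :=
  ρ.state 0 = q ∧
    ∀ j, ρ.eveMove j = σE (ρ.pref j) ∧
      ρ.state (j + 1) = DTab G (ρ.state j) (ρ.eveMove j) (ρ.adamMove j)

/-- Outcome of an Eve strategy from the initial state `(s0, ∅)` of `D(G)`. -/
def IsOutcome (G : CGame Stat Agt Act) (σE : EveStrategy Stat Agt Act)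
    (ρ : DPlay Stat Agt Act) : Prop :=
  IsDPlayFrom G (G.s0, ∅) σE ρ

/-- An Eve strategy is winning for objective `Ω` if all its outcomes belong to `Ω`. -/
def Winning (G : CGame Stat Agt Act) (σE : EveStrategy Stat Agt Act)
    (Ω : Set (DPlay Stat Agt Act)) : Prop :=
  ∀ ρ, IsOutcome G σE ρ → ρ ∈ Ω

/-- `σ` is `k`-resilient: `C`-resilient for every coalition `C` of size at most `k`. -/
def kResilient (G : CGame Stat Agt Act) (σ : Profile Stat Agt Act) (k : ℕ) : Prop :=
  ∀ C : Set Agt, C.ncard ≤ k → ∀ σ' : Profile Stat Agt Act, ∀ A ∈ C,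
    payoffProfile G (combine C σ σ') A ≤ payoffProfile G σ A

/-- `σ` is `(t,r)`-immune: `(C,r)`-immune for every coalition `C` of size at most `t`. -/
def tImmune (G : CGame Stat Agt Act) (σ : Profile Stat Agt Act) (t : ℕ) (r : ℝ) : Prop :=
  ∀ C : Set Agt, C.ncard ≤ t → ∀ σ' : Profile Stat Agt Act, ∀ A ∉ C,
    payoffProfile G σ A - r ≤ payoffProfile G (combine C σ σ') A

/-- The resilience objective `Re(k,p)`. -/
def ReObj (G : CGame Stat Agt Act) (k : ℕ) (p : Agt → ℝ) : Set (DPlay Stat Agt Act) :=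
  {ρ | k < (delta ρ).ncard} ∪
    {ρ | (delta ρ).ncard = k ∧ ∀ A ∈ delta ρ, payoffPlay G A (projPlay ρ) ≤ p A} ∪
    {ρ | (delta ρ).ncard < k ∧ ∀ A : Agt, payoffPlay G A (projPlay ρ) ≤ p A}

/-- The immunity objective `I(t,r,p)`. -/
def ImmObj (G : CGame Stat Agt Act) (t : ℕ) (r : ℝ) (p : Agt → ℝ) : Set (DPlay Stat Agt Act) :=
  {ρ | t < (delta ρ).ncard} ∪
    {ρ | ∀ A ∉ delta ρ, p A - r ≤ payoffPlay G A (projPlay ρ)}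

/-- Mean payoff (liminf) of a weight function on states of `D(G)` along a play. -/
noncomputable def MP (u : DState Stat Agt → ℤ) (ρ : DPlay Stat Agt Act) : ℝ :=
  Filter.liminf
    (fun m => (∑ l ∈ Finset.range (m + 1), (u (ρ.state l) : ℝ)) / (m : ℝ)) Filter.atTop

/-- Mean payoff (limsup) of a weight function on states of `D(G)` along a play. -/
noncomputable def MPSup (u : DState Stat Agt → ℤ) (ρ : DPlay Stat Agt Act) : ℝ :=
  Filter.limsup
    (fun m => (∑ l ∈ Finset.range (m + 1), (u (ρ.state l) : ℝ)) / (m : ℝ)) Filter.atTop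

end Defs

/-!
A deviation of a coalition `C` from `σ` produces exactly the plays of `G` whose deviators
`devPlay σ ρ` lie in `C`, and the outcomes of `π(σ)` in `D(G)` are exactly the plays of `G` lifted
by recording their deviators, so that `δ` of the lift is `devPlay σ ρ`. Hence `k`-resilience says
that along every play `ρ`, the members of every coalition `C ⊇ devPlay σ ρ` with `|C| ≤ k` gain
nothing; there is no such `C` if `|devPlay σ ρ| > k`, only `C = devPlay σ ρ` if
`|devPlay σ ρ| = k`, and every player can be added to it if `|devPlay σ ρ| < k`: these are the
three cases of `Re(k,p)`. Immunity reduces to `I(t,r,p)` in the same way, taking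
`C = devPlay σ ρ`.
-/

attribute [ext] Play DPlay

namespace Set

variable {α : Type*} [Finite α]

theorem forall_superset_ncard_le_mem_iff (D : Set α) (k : ℕ) (P : α → Prop) :
    (∀ C : Set α, C.ncard ≤ k → D ⊆ C → ∀ A ∈ C, P A) ↔
      (k < D.ncard ∨ D.ncard = k ∧ ∀ A ∈ D, P A) ∨ D.ncard < k ∧ ∀ A, P A := by
  constructor
  · intro h
    rcases lt_trichotomy k D.ncard with hk | hk | hk
    · exact .inl (.inl hk)
    · exact .inl (.inr ⟨hk.symm, h D hk.ge subset_rfl⟩)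
    · refine .inr ⟨hk, fun A => h (insert A D) ?_ (subset_insert A D) A (mem_insert A D)⟩
      exact (ncard_insert_le A D).trans hk
  · intro h C hC hDC A hA
    have hDk : D.ncard ≤ k := (ncard_le_ncard hDC).trans hC
    rcases h with (hk | ⟨hk, hP⟩) | ⟨-, hP⟩
    · omega
    · exact hP A (eq_of_subset_of_ncard_le hDC (by omega) ▸ hA)
    · exact hP A

theorem forall_superset_ncard_le_notMem_iff (D : Set α) (t : ℕ) (P : α → Prop) :
    (∀ C : Set α, C.ncard ≤ t → D ⊆ C → ∀ A ∉ C, P A) ↔ t < D.ncard ∨ ∀ A ∉ D, P A := by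
  constructor
  · intro h
    by_cases ht : t < D.ncard
    · exact .inl ht
    · exact .inr (h D (not_lt.1 ht) subset_rfl)
  · intro h C hC hDC A hA
    rcases h with ht | hP
    · have := (ncard_le_ncard hDC).trans hC
      omega
    · exact hP A fun hAD => hA (hDC hAD)

end Set

variable {Stat Agt Act : Type}

theorem histLast_append_singleton (s : Stat) (l : List ((Agt → Act) × Stat)) (a : Agt → Act)
    (s' : Stat) : histLast ((s, l ++ [(a, s')]) : Hist Stat Agt Act) = s' := by
  simp [histLast]

namespace Play

variable (ρ : Play Stat Agt Act)

theorem pref_zero : ρ.pref 0 = (ρ.state 0, []) := by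
  simp [Play.pref]

theorem pref_succ (m : ℕ) :
    ρ.pref (m + 1) = (ρ.state 0, (ρ.pref m).2 ++ [(ρ.move m, ρ.state (m + 1))]) := by
  simp [Play.pref, List.range_succ]

theorem pref_length (m : ℕ) : (ρ.pref m).2.length = m := by
  simp [Play.pref]

theorem histLast_pref : ∀ m, histLast (ρ.pref m) = ρ.state m
  | 0 => by simp [pref_zero, histLast]
  | m + 1 => by rw [pref_succ]; exact histLast_append_singleton _ _ _ _

end Play

section Outcome

variable (G : CGame Stat Agt Act) (τ : Profile Stat Agt Act)

theorem outcomePlay_state_zero : (outcomePlay G τ).state 0 = G.s0 := rfl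

theorem isPlay_outcomePlay : IsPlay G (outcomePlay G τ) :=
  fun _ => histLast_append_singleton _ _ _ _

theorem outHist_succ (m : ℕ) :
    outHist G τ (m + 1) = ((outHist G τ m).1, (outHist G τ m).2 ++
      [(fun A => τ A (outHist G τ m),
        G.Tab (histLast (outHist G τ m)) fun A => τ A (outHist G τ m))]) :=
  rfl

theorem outHist_eq_pref : ∀ m, outHist G τ m = (outcomePlay G τ).pref m
  | 0 => rfl
  | m + 1 => by
    have hfst : (outHist G τ m).1 = (outcomePlay G τ).state 0 := by
      rw [outHist_eq_pref m]
      rfl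
    rw [Play.pref_succ, ← outHist_eq_pref m, isPlay_outcomePlay G τ m, outHist_succ, hfst]
    rfl

theorem outcomePlay_move (m : ℕ) (A : Agt) :
    (outcomePlay G τ).move m A = τ A ((outcomePlay G τ).pref m) := by
  rw [← outHist_eq_pref]
  rfl

variable {G τ}

theorem outcomePlay_eq_of_isPlay {ρ : Play Stat Agt Act} (h0 : ρ.state 0 = G.s0)
    (hρ : IsPlay G ρ) (hmove : ∀ m A, τ A (ρ.pref m) = ρ.move m A) : outcomePlay G τ = ρ := by
  have hhist : ∀ m, outHist G τ m = ρ.pref m := by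
    intro m
    induction m with
    | zero => rw [ρ.pref_zero, h0]; rfl
    | succ m ih =>
      rw [outHist_succ, ih, ρ.pref_succ, hρ m, ρ.histLast_pref]
      simp only [hmove]
      rfl
  ext m
  · exact (congrArg histLast (hhist m)).trans (ρ.histLast_pref m)
  · exact (congrArg _ (hhist m)).trans (hmove m _)

end Outcome

section Deviators

variable (σ : Profile Stat Agt Act) (ρ : Play Stat Agt Act)

theorem devMove_comm (a a' : Agt → Act) : devMove a a' = devMove a' a :=
  Set.ext fun _ => ne_comm

theorem devPref_zero : devPref σ ρ 0 = ∅ := by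
  simp [devPref]

theorem devPref_succ (i : ℕ) :
    devPref σ ρ (i + 1) = devPref σ ρ i ∪ devMove (ρ.move i) fun A => σ A (ρ.pref i) := by
  simp only [devPref, Finset.range_add_one, Finset.set_biUnion_insert]
  exact Set.union_comm _ _

theorem iUnion_devPref : ⋃ i, devPref σ ρ i = devPlay σ ρ := by
  ext A
  simp only [devPref, devPlay, Set.mem_iUnion, Finset.mem_range, exists_prop]
  exact ⟨fun ⟨_, j, _, hj⟩ => ⟨j, hj⟩, fun ⟨j, hj⟩ => ⟨j + 1, j, j.lt_succ_self, hj⟩⟩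

variable {σ ρ}

theorem devPlay_subset_iff {C : Set Agt} :
    devPlay σ ρ ⊆ C ↔ ∀ j, ∀ A ∉ C, ρ.move j A = σ A (ρ.pref j) := by
  simp only [devPlay, Set.iUnion_subset_iff]
  exact forall_congr' fun j => ⟨fun h A hA => not_not.1 fun hne => hA (h hne),
    fun h A hA => by_contra fun hAC => hA (h A hAC)⟩

variable {G : CGame Stat Agt Act}

theorem exists_outcomePlay_combine_eq {C : Set Agt} (h0 : ρ.state 0 = G.s0) (hρ : IsPlay G ρ)
    (hdev : devPlay σ ρ ⊆ C) : ∃ σ', outcomePlay G (combine C σ σ') = ρ := by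
  classical
  refine ⟨fun A h => ρ.move h.2.length A, outcomePlay_eq_of_isPlay h0 hρ fun m A => ?_⟩
  by_cases hA : A ∈ C
  · simp [combine, hA, Play.pref_length]
  · simp [combine, hA, devPlay_subset_iff.1 hdev m A hA]

theorem devPlay_outcomePlay_combine_subset (C : Set Agt) (σ' : Profile Stat Agt Act) :
    devPlay σ (outcomePlay G (combine C σ σ')) ⊆ C :=
  devPlay_subset_iff.2 fun j A hA => by simp [outcomePlay_move, combine, hA]

end Deviators

section DeviatorGame

def liftPlay (σ : Profile Stat Agt Act) (ρ : Play Stat Agt Act) : DPlay Stat Agt Act :=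
  ⟨fun j => (ρ.state j, devPref σ ρ j), fun j A => σ A (ρ.pref j), ρ.move⟩

variable {G : CGame Stat Agt Act} {σ : Profile Stat Agt Act}

@[simp]
theorem projPlay_liftPlay (ρ : Play Stat Agt Act) : projPlay (liftPlay σ ρ) = ρ := rfl

@[simp]
theorem delta_liftPlay (ρ : Play Stat Agt Act) : delta (liftPlay σ ρ) = devPlay σ ρ :=
  iUnion_devPref σ ρ

theorem projHist_pref (ρ : DPlay Stat Agt Act) (j : ℕ) :
    projHist (ρ.pref j) = (projPlay ρ).pref j := by
  simp [projHist, DPlay.pref, projPlay, Play.pref]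

theorem isOutcome_liftPlay {ρ : Play Stat Agt Act} (h0 : ρ.state 0 = G.s0) (hρ : IsPlay G ρ) :
    IsOutcome G (eveOf σ) (liftPlay σ ρ) := by
  refine ⟨by simp [liftPlay, h0, devPref_zero], fun j => ⟨?_, ?_⟩⟩
  · funext A
    simp only [eveOf, projHist_pref]
    rfl
  · simp only [liftPlay, DTab, hρ j, devPref_succ, devMove_comm]

theorem eveMove_eq_of_isOutcome {ρ : DPlay Stat Agt Act} (hρ : IsOutcome G (eveOf σ) ρ) (j : ℕ) :
    ρ.eveMove j = fun A => σ A ((projPlay ρ).pref j) := by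
  rw [(hρ.2 j).1, ← projHist_pref]
  rfl

theorem liftPlay_projPlay {ρ : DPlay Stat Agt Act} (hρ : IsOutcome G (eveOf σ) ρ) :
    liftPlay σ (projPlay ρ) = ρ := by
  have hdev : ∀ j, devPref σ (projPlay ρ) j = (ρ.state j).2 := by
    intro j
    induction j with
    | zero => rw [devPref_zero, hρ.1]
    | succ j ih =>
      rw [devPref_succ, ih, (hρ.2 j).2, eveMove_eq_of_isOutcome hρ j, devMove_comm]
      rfl
  exact DPlay.ext (funext fun j => Prod.ext rfl (hdev j))
    (funext fun j => (eveMove_eq_of_isOutcome hρ j).symm) rfl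

theorem isPlay_projPlay {ρ : DPlay Stat Agt Act} (hρ : IsOutcome G (eveOf σ) ρ) :
    IsPlay G (projPlay ρ) := by
  intro j
  simp only [projPlay, (hρ.2 j).2, DTab]

theorem winning_eveOf_iff {Ω : Set (DPlay Stat Agt Act)} :
    Winning G (eveOf σ) Ω ↔
      ∀ ρ : Play Stat Agt Act, ρ.state 0 = G.s0 → IsPlay G ρ → liftPlay σ ρ ∈ Ω := by
  refine ⟨fun h ρ h0 hρ => h _ (isOutcome_liftPlay h0 hρ), fun h ρ hρ => ?_⟩
  rw [← liftPlay_projPlay hρ]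
  exact h _ (by simp [projPlay, hρ.1]) (isPlay_projPlay hρ)

theorem winning_inter {σE : EveStrategy Stat Agt Act} {Ω₁ Ω₂ : Set (DPlay Stat Agt Act)} :
    Winning G σE (Ω₁ ∩ Ω₂) ↔ Winning G σE Ω₁ ∧ Winning G σE Ω₂ :=
  ⟨fun h => ⟨fun ρ hρ => (h ρ hρ).1, fun ρ hρ => (h ρ hρ).2⟩,
    fun h ρ hρ => ⟨h.1 ρ hρ, h.2 ρ hρ⟩⟩

end DeviatorGame

section Robustness

variable [Finite Agt] (G : CGame Stat Agt Act) (σ : Profile Stat Agt Act)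

theorem kResilient_iff_winning_reObj (k : ℕ) :
    kResilient G σ k ↔ Winning G (eveOf σ) (ReObj G k (payoffProfile G σ)) := by
  simp only [winning_eveOf_iff, ReObj, Set.mem_union, Set.mem_ofPred_eq, projPlay_liftPlay,
    delta_liftPlay, ← Set.forall_superset_ncard_le_mem_iff]
  constructor
  · intro h ρ h0 hρ C hC hdev A hA
    obtain ⟨σ', rfl⟩ := exists_outcomePlay_combine_eq h0 hρ hdev
    exact h C hC σ' A hA
  · intro h C hC σ' A hA
    exact h _ (outcomePlay_state_zero G _) (isPlay_outcomePlay G _) C hC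
      (devPlay_outcomePlay_combine_subset C σ') A hA

theorem tImmune_iff_winning_immObj (t : ℕ) (r : ℝ) :
    tImmune G σ t r ↔ Winning G (eveOf σ) (ImmObj G t r (payoffProfile G σ)) := by
  simp only [winning_eveOf_iff, ImmObj, Set.mem_union, Set.mem_ofPred_eq, projPlay_liftPlay,
    delta_liftPlay, ← Set.forall_superset_ncard_le_notMem_iff]
  constructor
  · intro h ρ h0 hρ C hC hdev A hA
    obtain ⟨σ', rfl⟩ := exists_outcomePlay_combine_eq h0 hρ hdev
    exact h C hC σ' A hA
  · intro h C hC σ' A hA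
    exact h _ (outcomePlay_state_zero G _) (isPlay_outcomePlay G _) C hC
      (devPlay_outcomePlay_combine_subset C σ') A hA

end Robustness

theorem statement6_general {Stat Agt Act : Type} [Fintype Agt]
    (G : CGame Stat Agt Act) (σ : Profile Stat Agt Act) (k t : ℕ) (r : ℝ) :
    (kResilient G σ k ∧ tImmune G σ t r) ↔
      Winning G (eveOf σ)
        (ReObj G k (payoffProfile G σ) ∩ ImmObj G t r (payoffProfile G σ)) := by
  rw [winning_inter, kResilient_iff_winning_reObj, tImmune_iff_winning_immObj]

theorem statement6 {Stat Agt Act : Type} [Fintype Stat] [Fintype Agt] [Fintype Act]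
    (G : CGame Stat Agt Act) (σ : Profile Stat Agt Act) (k t : ℕ) (r : ℝ) :
    (kResilient G σ k ∧ tImmune G σ t r) ↔
      Winning G (eveOf σ)
        (ReObj G k (payoffProfile G σ) ∩ ImmObj G t r (payoffProfile G σ)) :=
  statement6_general G σ k t r
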